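/- The stable self-similar Burgers profile satisfies the weighted bounds \(|\overline{W}(y)| \le (1+y^2)^{1/6}\), \(|\overline{W}'(y)| \le (1+y^2)^{-1/3}\), and \(|\overline{W}''(y)| \le (1+y^2)^{-5/6}\) for every real y, where \(\overline{W}'\) and \(\overline{W}''\) denote the first and second derivatives. -/

import Mathlib

/-!
`burgersW y` is Cardano's formula for the real root `W` of `W ^ 3 + W + y = 0`. The inverse
function theorem gives `W' = -(1 + 3 W²)⁻¹`, hence `W'' = -6 W / (1 + 3 W²) ^ 3`. Substituting
`y = -(W ^ 3 + W)` and raising both sides to the power clearing the exponents, each bound becomes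
a polynomial inequality in `W` alone; only the one for `W''` is not immediate.
-/

/-- The stable self-similar Burgers profile. -/
noncomputable def burgersW (y : ℝ) : ℝ :=
  (-(y / 2) + Real.sqrt (1 / 27 + y ^ 2 / 4)) ^ ((1 : ℝ) / 3)
    - (y / 2 + Real.sqrt (1 / 27 + y ^ 2 / 4)) ^ ((1 : ℝ) / 3)

open Real

lemma le_rpow_div_of_pow_le_zpow {a Q : ℝ} {n : ℕ} {k : ℤ} (ha : 0 ≤ a) (hQ : 0 < Q)
    (hn : n ≠ 0) (h : a ^ n ≤ Q ^ k) : a ≤ Q ^ ((k : ℝ) / n) := by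
  rw [div_eq_mul_inv, rpow_mul hQ.le, rpow_intCast,
    le_rpow_inv_iff_of_pos ha (zpow_nonneg hQ.le k) (by positivity), rpow_natCast]
  exact h

lemma rpow_one_div_three_pow_three {x : ℝ} (hx : 0 ≤ x) : (x ^ ((1 : ℝ) / 3)) ^ 3 = x := by
  simpa using rpow_inv_natCast_pow (n := 3) hx (by norm_num)

lemma burgersW_cubic (y : ℝ) : burgersW y ^ 3 + burgersW y + y = 0 := by
  set s := √(1 / 27 + y ^ 2 / 4)
  have hs : s ^ 2 = 1 / 27 + y ^ 2 / 4 := sq_sqrt (by positivity)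
  have hA : 0 < -(y / 2) + s := by nlinarith [sqrt_nonneg (1 / 27 + y ^ 2 / 4)]
  have hB : 0 < y / 2 + s := by nlinarith [sqrt_nonneg (1 / 27 + y ^ 2 / 4)]
  -- Cardano: the two cube roots `a`, `b` satisfy `a ^ 3 - b ^ 3 = -y` and `a * b = 1 / 3`.
  have hab : (-(y / 2) + s) ^ ((1 : ℝ) / 3) * (y / 2 + s) ^ ((1 : ℝ) / 3) = 1 / 3 := by
    rw [← mul_rpow hA.le hB.le, show (-(y / 2) + s) * (y / 2 + s) = (1 / 3) ^ 3 by nlinarith,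
      ← rpow_natCast, ← rpow_mul (by norm_num)]
    norm_num
  have key (a b : ℝ) :
      (a - b) ^ 3 + (a - b) = a ^ 3 - b ^ 3 - 3 * (a * b - 1 / 3) * (a - b) := by ring
  rw [burgersW, key, hab, rpow_one_div_three_pow_three hA.le, rpow_one_div_three_pow_three hB.le]
  ring

lemma continuous_burgersW : Continuous burgersW := by
  unfold burgersW
  fun_prop (disch := norm_num)

lemma hasDerivAt_burgersW (y : ℝ) : HasDerivAt burgersW (-(1 + 3 * burgersW y ^ 2)⁻¹) y := by
  have hf : HasDerivAt (fun w : ℝ => -w - w ^ 3) (-(1 + 3 * burgersW y ^ 2)) (burgersW y) := by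
    refine ((hasDerivAt_id _).fun_neg.fun_sub (hasDerivAt_pow 3 (burgersW y))).congr_deriv ?_
    push_cast; ring
  rw [← inv_neg]
  refine hf.of_local_left_inverse continuous_burgersW.continuousAt
    (neg_ne_zero.2 (by positivity)) ?_
  filter_upwards with z
  linarith [burgersW_cubic z]

lemma deriv_burgersW : deriv burgersW = fun y => -(1 + 3 * burgersW y ^ 2)⁻¹ :=
  funext fun y => (hasDerivAt_burgersW y).deriv

lemma hasDerivAt_neg_inv_one_add_three_sq (w : ℝ) :
    HasDerivAt (fun w : ℝ => -(1 + 3 * w ^ 2)⁻¹) (6 * w / (1 + 3 * w ^ 2) ^ 2) w := by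
  have h := (((hasDerivAt_pow 2 w).const_mul 3).const_add 1).fun_inv (by positivity)
  refine h.fun_neg.congr_deriv ?_
  push_cast; ring

lemma iteratedDeriv_two_burgersW (y : ℝ) :
    iteratedDeriv 2 burgersW y = -(6 * burgersW y / (1 + 3 * burgersW y ^ 2) ^ 3) := by
  have h := (hasDerivAt_neg_inv_one_add_three_sq (burgersW y)).comp y (hasDerivAt_burgersW y)
  rw [iteratedDeriv_succ, iteratedDeriv_one, deriv_burgersW]
  change deriv ((fun w : ℝ => -(1 + 3 * w ^ 2)⁻¹) ∘ burgersW) y = _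
  rw [h.deriv]
  have : 1 + 3 * burgersW y ^ 2 ≠ 0 := by positivity
  field_simp

section CubicBounds

variable {w y : ℝ}

lemma abs_le_rpow_of_cubic (h : w ^ 3 + w + y = 0) : |w| ≤ (1 + y ^ 2) ^ ((1 : ℝ) / 6) := by
  rw [show (1 : ℝ) / 6 = ((1 : ℤ) : ℝ) / (6 : ℕ) by norm_num]
  refine le_rpow_div_of_pow_le_zpow (abs_nonneg w) (by positivity) (by norm_num) ?_
  rw [pow_abs, abs_of_nonneg (by positivity), zpow_one, show y = -(w ^ 3 + w) by linarith]
  nlinarith [sq_nonneg w, sq_nonneg (w ^ 2)]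

lemma inv_le_rpow_of_cubic (h : w ^ 3 + w + y = 0) :
    (1 + 3 * w ^ 2)⁻¹ ≤ (1 + y ^ 2) ^ (-(1 : ℝ) / 3) := by
  rw [show -(1 : ℝ) / 3 = ((-1 : ℤ) : ℝ) / (3 : ℕ) by norm_num]
  refine le_rpow_div_of_pow_le_zpow (by positivity) (by positivity) (by norm_num) ?_
  rw [inv_pow, zpow_neg_one]
  refine inv_anti₀ (by positivity) ?_
  rw [show y = -(w ^ 3 + w) by linarith]
  nlinarith [sq_nonneg w, sq_nonneg (w ^ 2), sq_nonneg (w ^ 3)]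

lemma pow_six_mul_one_add_sq_pow_five_le (w : ℝ) :
    (6 * w) ^ 6 * (1 + (w ^ 3 + w) ^ 2) ^ 5 ≤ ((1 + 3 * w ^ 2) ^ 3) ^ 6 := by
  -- sum-of-squares certificate
  have key : ((1 + 3 * w ^ 2) ^ 3) ^ 6 - (6 * w) ^ 6 * (1 + (w ^ 3 + w) ^ 2) ^ 5 =
      54 * (w - (729/5) * w ^ 5) ^ 2 + 1377 * (w ^ 2 - (13/4) * w ^ 4) ^ 2 +
      (1 + (729/10) * w ^ 6 + (567/16) * w ^ 8 + (24786/25) * w ^ 10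
        + 10967076 * w ^ 12 + 63767088 * w ^ 14 + 276318702 * w ^ 16
        + 940191300 * w ^ 18 + 2561704542 * w ^ 20 + 5612798448 * w ^ 22
        + 9842342724 * w ^ 24 + 13641870312 * w ^ 26 + 14624221140 * w ^ 28
        + 11702876112 * w ^ 30 + 6584048793 * w ^ 32 + 2324056374 * w ^ 34
        + 387373833 * w ^ 36) := by ring
  rw [← sub_nonneg, key]
  positivity

lemma abs_div_le_rpow_of_cubic (h : w ^ 3 + w + y = 0) :
    |6 * w| / (1 + 3 * w ^ 2) ^ 3 ≤ (1 + y ^ 2) ^ (-(5 : ℝ) / 6) := by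
  rw [show -(5 : ℝ) / 6 = ((-5 : ℤ) : ℝ) / (6 : ℕ) by norm_num]
  refine le_rpow_div_of_pow_le_zpow (by positivity) (by positivity) (by norm_num) ?_
  rw [div_pow, zpow_neg, pow_abs, abs_of_nonneg (by positivity), div_le_iff₀ (by positivity),
    inv_mul_eq_div, le_div_iff₀ (by positivity), show y = -(w ^ 3 + w) by linarith, neg_sq]
  exact pow_six_mul_one_add_sq_pow_five_le w

end CubicBounds

/-- Weighted estimates: for all real `y`,
`|W̄(y)| ≤ (1+y²)^(1/6)`, `|W̄'(y)| ≤ (1+y²)^(-1/3)`, `|W̄''(y)| ≤ (1+y²)^(-5/6)`. -/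
theorem burgersW_weighted_bounds (y : ℝ) :
    |burgersW y| ≤ (1 + y ^ 2) ^ ((1 : ℝ) / 6) ∧
      |deriv burgersW y| ≤ (1 + y ^ 2) ^ (-(1 : ℝ) / 3) ∧
      |iteratedDeriv 2 burgersW y| ≤ (1 + y ^ 2) ^ (-(5 : ℝ) / 6) := by
  have hW := burgersW_cubic y
  have hpos : 0 < 1 + 3 * burgersW y ^ 2 := by positivity
  refine ⟨abs_le_rpow_of_cubic hW, ?_, ?_⟩
  · rw [deriv_burgersW, abs_neg, abs_inv, abs_of_pos hpos]
    exact inv_le_rpow_of_cubic hW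
  · rw [iteratedDeriv_two_burgersW, abs_neg, abs_div, abs_of_pos (pow_pos hpos 3)]
    exact abs_div_le_rpow_of_cubic hW
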